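/- arXiv:1903.06514 — 4 statements merged into one kernel-verified Lean document; each statement's English description precedes it below -/
import Mathlib

section
/- Let O and P be complete lattices and let F : O → P and G : P → O be continuous, i.e., each preserves sInf and sSup of all nonempty subsets. Let C = {o ∈ O | ∃ p ∈ P, F o ≤ p ∧ G p ≤ o} and D = {p ∈ P | ∃ o ∈ O, F o ≤ p ∧ G p ≤ o} be the sets of all components of simultaneous pre-fixed points of F and G. Then C is closed under nonempty infima and suprema (for every nonempty A ⊆ C, sInf A ∈ C and sSup A ∈ C), and likewise D is closed under nonempty infima and suprema. -/
/-!
If `F a ≤ b` and `G b ≤ a` for each `a` in a family, then the infimum of the `a`'s together with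
the infimum of the `b`'s is again a simultaneous pre-fixed point, by monotonicity alone (which
follows from preservation of suprema of pairs). For suprema, monotonicity bounds `F (⨆ a)` from
below only; here one uses that `F` and `G` commute with nonempty suprema. Swapping the roles of
`F` and `G` reduces the statement about `P` to the one about `O`.
-/

section

variable {α β : Type*} [CompleteLattice α] [CompleteLattice β]

def preFixedComponents (F : α → β) (G : β → α) : Set α :=
  {a | ∃ b, F a ≤ b ∧ G b ≤ a}

theorem preFixedComponents_swap (F : α → β) (G : β → α) :
    preFixedComponents G F = {b | ∃ a, F a ≤ b ∧ G b ≤ a} := by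
  ext b
  simp only [preFixedComponents, Set.mem_ofPred_eq, and_comm]

theorem monotone_of_map_sSup {F : α → β}
    (hF : ∀ M : Set α, M.Nonempty → F (sSup M) = sSup (F '' M)) : Monotone F := by
  intro x y hxy
  have h := hF {x, y} (Set.insert_nonempty x {y})
  rw [sSup_pair, sup_eq_right.mpr hxy, Set.image_pair, sSup_pair] at h
  exact h ▸ le_sup_left

theorem sInf_mem_preFixedComponents {F : α → β} {G : β → α} (hF : Monotone F) (hG : Monotone G)
    {A : Set α} (hA : A ⊆ preFixedComponents F G) : sInf A ∈ preFixedComponents F G := by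
  choose b hb using fun a : A => hA a.2
  refine ⟨⨅ a, b a, le_iInf fun a => (hF (sInf_le a.2)).trans (hb a).1, ?_⟩
  exact le_sInf fun a ha => (hG (iInf_le b ⟨a, ha⟩)).trans (hb ⟨a, ha⟩).2

theorem sSup_mem_preFixedComponents {F : α → β} {G : β → α}
    (hF : ∀ M : Set α, M.Nonempty → F (sSup M) = sSup (F '' M))
    (hG : ∀ N : Set β, N.Nonempty → G (sSup N) = sSup (G '' N))
    {A : Set α} (hA : A ⊆ preFixedComponents F G) (hne : A.Nonempty) :
    sSup A ∈ preFixedComponents F G := by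
  choose b hb using fun a : A => hA a.2
  have : Nonempty A := hne.to_subtype
  refine ⟨sSup (Set.range b), ?_, ?_⟩
  · rw [hF A hne]
    refine sSup_le ?_
    rintro _ ⟨a, ha, rfl⟩
    exact (hb ⟨a, ha⟩).1.trans (le_sSup ⟨⟨a, ha⟩, rfl⟩)
  · rw [hG _ (Set.range_nonempty b)]
    refine sSup_le ?_
    rintro _ ⟨_, ⟨a, rfl⟩, rfl⟩
    exact (hb a).2.trans (le_sSup a.2)

end

theorem components_of_simultaneous_prefixed_points_closed_general
    {O P : Type*} [CompleteLattice O] [CompleteLattice P]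
    (F : O → P) (G : P → O)
    (hFsup : ∀ M : Set O, M.Nonempty → F (sSup M) = sSup (F '' M))
    (hGsup : ∀ N : Set P, N.Nonempty → G (sSup N) = sSup (G '' N)) :
    (∀ A : Set O, A ⊆ {o : O | ∃ p : P, F o ≤ p ∧ G p ≤ o} → A.Nonempty →
      sInf A ∈ {o : O | ∃ p : P, F o ≤ p ∧ G p ≤ o} ∧
      sSup A ∈ {o : O | ∃ p : P, F o ≤ p ∧ G p ≤ o}) ∧
    (∀ B : Set P, B ⊆ {p : P | ∃ o : O, F o ≤ p ∧ G p ≤ o} → B.Nonempty →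
      sInf B ∈ {p : P | ∃ o : O, F o ≤ p ∧ G p ≤ o} ∧
      sSup B ∈ {p : P | ∃ o : O, F o ≤ p ∧ G p ≤ o}) := by
  have hFmono := monotone_of_map_sSup hFsup
  have hGmono := monotone_of_map_sSup hGsup
  refine ⟨fun A hA hne => ⟨sInf_mem_preFixedComponents hFmono hGmono hA,
    sSup_mem_preFixedComponents hFsup hGsup hA hne⟩, fun B hB hne => ?_⟩
  rw [← preFixedComponents_swap] at hB ⊢
  exact ⟨sInf_mem_preFixedComponents hGmono hFmono hB,
    sSup_mem_preFixedComponents hGsup hFsup hB hne⟩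

theorem components_of_simultaneous_prefixed_points_closed
    {O P : Type*} [CompleteLattice O] [CompleteLattice P]
    (F : O → P) (G : P → O)
    (hFinf : ∀ M : Set O, M.Nonempty → F (sInf M) = sInf (F '' M))
    (hFsup : ∀ M : Set O, M.Nonempty → F (sSup M) = sSup (F '' M))
    (hGinf : ∀ N : Set P, N.Nonempty → G (sInf N) = sInf (G '' N))
    (hGsup : ∀ N : Set P, N.Nonempty → G (sSup N) = sSup (G '' N)) :
    (∀ A : Set O, A ⊆ {o : O | ∃ p : P, F o ≤ p ∧ G p ≤ o} → A.Nonempty →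
      sInf A ∈ {o : O | ∃ p : P, F o ≤ p ∧ G p ≤ o} ∧
      sSup A ∈ {o : O | ∃ p : P, F o ≤ p ∧ G p ≤ o}) ∧
    (∀ B : Set P, B ⊆ {p : P | ∃ o : O, F o ≤ p ∧ G p ≤ o} → B.Nonempty →
      sInf B ∈ {p : P | ∃ o : O, F o ≤ p ∧ G p ≤ o} ∧
      sSup B ∈ {p : P | ∃ o : O, F o ≤ p ∧ G p ≤ o}) :=
  components_of_simultaneous_prefixed_points_closed_general F G hFsup hGsup
end

section
/- (Simultaneous Fixed Points Theorem, least part.) Let O and P be complete lattices and let F : O → P and G : P → O be continuous, i.e., each preserves sInf and sSup of all nonempty subsets. Define μF = sInf {o ∈ O | ∃ p ∈ P, F o ≤ p ∧ G p ≤ o} and μG = sInf {p ∈ P | ∃ o ∈ O, F o ≤ p ∧ G p ≤ o}. Then F μF = μG and G μG = μF (so (μF, μG) is a simultaneous fixed point of F and G), and for every simultaneous pre-fixed point (o, p) of F and G (i.e., F o ≤ p and G p ≤ o) one has μF ≤ o and μG ≤ p; hence (μF, μG) is the least simultaneous pre-fixed point and the least simultaneous fixed point of F and G. -/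
/-!
A pre-fixed point `(o, p)` can always be replaced by `(o, F o)`, so the first coordinates of the
simultaneous pre-fixed points are exactly the pre-fixed points of `G ∘ F`, and `μF = lfp (G ∘ F)`;
symmetrically `μG = lfp (F ∘ G)`. The rolling rule `F (lfp (G ∘ F)) = lfp (F ∘ G)` then gives the
fixed-point equations.
-/

open OrderHom

theorem monotone_of_map_sInf {α β : Type*} [CompleteLattice α] [CompleteLattice β] {f : α → β}
    (hf : ∀ s : Set α, s.Nonempty → f (sInf s) = sInf (f '' s)) : Monotone f :=
  Monotone.of_map_inf fun x y => by
    simpa only [sInf_pair, Set.image_pair] using hf {x, y} (Set.insert_nonempty x {y})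

theorem OrderHom.sInf_setOf_exists_le_le_eq_lfp {α β : Type*} [CompleteLattice α]
    [CompleteLattice β] (f : α →o β) (g : β →o α) :
    sInf {a : α | ∃ b : β, f a ≤ b ∧ g b ≤ a} = lfp (g.comp f) := by
  congr 1
  ext a
  exact ⟨fun ⟨_, hfa, hga⟩ => (g.mono hfa).trans hga, fun h => ⟨f a, le_rfl, h⟩⟩

theorem simultaneous_fixed_points_least_general
    {O P : Type*} [CompleteLattice O] [CompleteLattice P]
    (F : O → P) (G : P → O)
    (hFinf : ∀ M : Set O, M.Nonempty → F (sInf M) = sInf (F '' M))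
    (hGinf : ∀ N : Set P, N.Nonempty → G (sInf N) = sInf (G '' N))
    (μF : O) (μG : P)
    (hμF : μF = sInf {o : O | ∃ p : P, F o ≤ p ∧ G p ≤ o})
    (hμG : μG = sInf {p : P | ∃ o : O, F o ≤ p ∧ G p ≤ o}) :
    F μF = μG ∧ G μG = μF ∧
    ∀ o : O, ∀ p : P, F o ≤ p → G p ≤ o → μF ≤ o ∧ μG ≤ p := by
  let F' : O →o P := ⟨F, monotone_of_map_sInf hFinf⟩
  let G' : P →o O := ⟨G, monotone_of_map_sInf hGinf⟩
  have hμF_lfp : μF = lfp (G'.comp F') := hμF.trans (F'.sInf_setOf_exists_le_le_eq_lfp G')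
  have hμG_lfp : μG = lfp (F'.comp G') := by
    simp_rw [hμG, and_comm (a := F _ ≤ _)]
    exact G'.sInf_setOf_exists_le_le_eq_lfp F'
  refine ⟨?_, ?_, fun o p hFo hGp => ⟨?_, ?_⟩⟩
  · rw [hμF_lfp, hμG_lfp]
    exact map_lfp_comp F' G'
  · rw [hμF_lfp, hμG_lfp]
    exact map_lfp_comp G' F'
  · exact hμF_lfp ▸ lfp_le _ ((G'.mono hFo).trans hGp)
  · exact hμG_lfp ▸ lfp_le _ ((F'.mono hGp).trans hFo)

theorem simultaneous_fixed_points_least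
    {O P : Type*} [CompleteLattice O] [CompleteLattice P]
    (F : O → P) (G : P → O)
    (hFinf : ∀ M : Set O, M.Nonempty → F (sInf M) = sInf (F '' M))
    (hFsup : ∀ M : Set O, M.Nonempty → F (sSup M) = sSup (F '' M))
    (hGinf : ∀ N : Set P, N.Nonempty → G (sInf N) = sInf (G '' N))
    (hGsup : ∀ N : Set P, N.Nonempty → G (sSup N) = sSup (G '' N))
    (μF : O) (μG : P)
    (hμF : μF = sInf {o : O | ∃ p : P, F o ≤ p ∧ G p ≤ o})
    (hμG : μG = sInf {p : P | ∃ o : O, F o ≤ p ∧ G p ≤ o}) :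
    F μF = μG ∧ G μG = μF ∧
    ∀ o : O, ∀ p : P, F o ≤ p → G p ≤ o → μF ≤ o ∧ μG ≤ p :=
  simultaneous_fixed_points_least_general F G hFinf hGinf μF μG hμF hμG
end

section
/- (Simultaneous Fixed Points Theorem, greatest part.) Let O and P be complete lattices and let F : O → P and G : P → O be continuous, i.e., each preserves sInf and sSup of all nonempty subsets. Define νF = sSup {o ∈ O | ∃ p ∈ P, p ≤ F o ∧ o ≤ G p} and νG = sSup {p ∈ P | ∃ o ∈ O, p ≤ F o ∧ o ≤ G p}. Then F νF = νG and G νG = νF (so (νF, νG) is a simultaneous fixed point of F and G), and for every simultaneous post-fixed point (o, p) of F and G (i.e., p ≤ F o and o ≤ G p) one has o ≤ νF and p ≤ νG; hence (νF, νG) is the greatest simultaneous post-fixed point and the greatest simultaneous fixed point of F and G. -/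
/-!
Simultaneous post-fixed points of `F` and `G` are exactly the post-fixed points of the monotone
self-map `(o, p) ↦ (G p, F o)` of the complete lattice `O × P`, so Knaster–Tarski applies to it.
Suprema in `O × P` are computed componentwise, which identifies `(νF, νG)` with its greatest
fixed point. Preserving suprema of pairs already makes `F` and `G` monotone.
-/

theorem Monotone.of_map_sSup_of_nonempty {α β : Type*} [CompleteLattice α] [CompleteLattice β]
    {f : α → β} (hf : ∀ s : Set α, s.Nonempty → f (sSup s) = sSup (f '' s)) : Monotone f := by
  intro a b hab
  have hpair := hf {a, b} (Set.insert_nonempty a {b})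
  rw [Set.image_pair, sSup_pair, sSup_pair, sup_eq_right.2 hab] at hpair
  exact hpair ▸ le_sup_left

namespace OrderHom

variable {α β : Type*}

section Preorder

variable [Preorder α] [Preorder β] (F : α →o β) (G : β →o α)

def cross : α × β →o α × β where
  toFun q := (G q.2, F q.1)
  monotone' _ _ h := Prod.mk_le_mk.2 ⟨G.monotone h.2, F.monotone h.1⟩

theorem le_cross_iff {q : α × β} : q ≤ cross F G q ↔ q.2 ≤ F q.1 ∧ q.1 ≤ G q.2 :=
  and_comm

end Preorder

variable [CompleteLattice α] [CompleteLattice β] (F : α →o β) (G : β →o α)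

theorem fst_gfp_cross : (gfp (cross F G)).1 = sSup {a | ∃ b, b ≤ F a ∧ a ≤ G b} := by
  change (sSup {q | q ≤ cross F G q}).1 = _
  rw [Prod.fst_sSup]
  congr 1
  ext a
  simp [le_cross_iff]

theorem snd_gfp_cross : (gfp (cross F G)).2 = sSup {b | ∃ a, b ≤ F a ∧ a ≤ G b} := by
  change (sSup {q | q ≤ cross F G q}).2 = _
  rw [Prod.snd_sSup]
  congr 1
  ext b
  simp [le_cross_iff]

end OrderHom

open OrderHom in
theorem simultaneous_fixed_points_greatest_general
    {O P : Type*} [CompleteLattice O] [CompleteLattice P]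
    (F : O → P) (G : P → O)
    (hFsup : ∀ M : Set O, M.Nonempty → F (sSup M) = sSup (F '' M))
    (hGsup : ∀ N : Set P, N.Nonempty → G (sSup N) = sSup (G '' N))
    (νF : O) (νG : P)
    (hνF : νF = sSup {o : O | ∃ p : P, p ≤ F o ∧ o ≤ G p})
    (hνG : νG = sSup {p : P | ∃ o : O, p ≤ F o ∧ o ≤ G p}) :
    F νF = νG ∧ G νG = νF ∧
    ∀ o : O, ∀ p : P, p ≤ F o → o ≤ G p → o ≤ νF ∧ p ≤ νG := by
  let F' : O →o P := ⟨F, .of_map_sSup_of_nonempty hFsup⟩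
  let G' : P →o O := ⟨G, .of_map_sSup_of_nonempty hGsup⟩
  have hν : (νF, νG) = gfp (cross F' G') :=
    Prod.ext (hνF.trans (fst_gfp_cross F' G').symm) (hνG.trans (snd_gfp_cross F' G').symm)
  have hfix : cross F' G' (νF, νG) = (νF, νG) := hν ▸ map_gfp _
  refine ⟨congrArg Prod.snd hfix, congrArg Prod.fst hfix, fun o p hp ho => ?_⟩
  exact Prod.mk_le_mk.1 (hν ▸ le_gfp _ ((le_cross_iff F' G').2 ⟨hp, ho⟩))

theorem simultaneous_fixed_points_greatest
    {O P : Type*} [CompleteLattice O] [CompleteLattice P]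
    (F : O → P) (G : P → O)
    (hFinf : ∀ M : Set O, M.Nonempty → F (sInf M) = sInf (F '' M))
    (hFsup : ∀ M : Set O, M.Nonempty → F (sSup M) = sSup (F '' M))
    (hGinf : ∀ N : Set P, N.Nonempty → G (sInf N) = sInf (G '' N))
    (hGsup : ∀ N : Set P, N.Nonempty → G (sSup N) = sSup (G '' N))
    (νF : O) (νG : P)
    (hνF : νF = sSup {o : O | ∃ p : P, p ≤ F o ∧ o ≤ G p})
    (hνG : νG = sSup {p : P | ∃ o : O, p ≤ F o ∧ o ≤ G p}) :
    F νF = νG ∧ G νG = νF ∧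
    ∀ o : O, ∀ p : P, p ≤ F o → o ≤ G p → o ≤ νF ∧ p ≤ νG :=
  simultaneous_fixed_points_greatest_general F G hFsup hGsup νF νG hνF hνG
end

section
/- (Least simultaneous fixed point under monotonicity alone.) Let O and P be complete lattices and let F : O → P and G : P → O be monotone. Define μF = sInf {o ∈ O | ∃ p ∈ P, F o ≤ p ∧ G p ≤ o} and μG = sInf {p ∈ P | ∃ o ∈ O, F o ≤ p ∧ G p ≤ o}. Then F μF = μG and G μG = μF (so (μF, μG) is a simultaneous fixed point of F and G), and for every simultaneous pre-fixed point (o, p) of F and G (i.e., F o ≤ p and G p ≤ o) one has μF ≤ o and μG ≤ p; hence (μF, μG) is the least simultaneous pre-fixed point and the least simultaneous fixed point of F and G. -/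
/-! The set defining `μF` contains `lfp (G ∘ F)` (paired with its image under `F`) and is
bounded below by it, because `F o ≤ p` and `G p ≤ o` force `G (F o) ≤ o`. Hence
`μF = lfp (G ∘ F)` and symmetrically `μG = lfp (F ∘ G)`, and the rolling rule
`F (lfp (G ∘ F)) = lfp (F ∘ G)` gives both fixed-point equations. -/

namespace OrderHom

variable {O P : Type*} [CompleteLattice O] [CompleteLattice P]

theorem isLeast_lfp_comp (F : O →o P) (G : P →o O) :
    IsLeast {o : O | ∃ p : P, F o ≤ p ∧ G p ≤ o} (G.comp F).lfp :=
  ⟨⟨F (G.comp F).lfp, le_rfl, (map_lfp (G.comp F)).le⟩,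
    fun _ ⟨_, hop, hpo⟩ => lfp_le _ ((G.mono hop).trans hpo)⟩

end OrderHom

theorem least_simultaneous_fixed_point_of_monotone
    {O P : Type*} [CompleteLattice O] [CompleteLattice P]
    (F : O → P) (G : P → O) (hF : Monotone F) (hG : Monotone G)
    (μF : O) (μG : P)
    (hμF : μF = sInf {o : O | ∃ p : P, F o ≤ p ∧ G p ≤ o})
    (hμG : μG = sInf {p : P | ∃ o : O, F o ≤ p ∧ G p ≤ o}) :
    F μF = μG ∧ G μG = μF ∧
    ∀ o : O, ∀ p : P, F o ≤ p → G p ≤ o → μF ≤ o ∧ μG ≤ p := by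
  let F' : O →o P := ⟨F, hF⟩
  let G' : P →o O := ⟨G, hG⟩
  have hμF_lfp : μF = (G'.comp F').lfp := hμF.trans (OrderHom.isLeast_lfp_comp F' G').csInf_eq
  have hμG_lfp : μG = (F'.comp G').lfp :=
    hμG.trans <| (congrArg sInf <| Set.ext fun _ => exists_congr fun _ => and_comm).trans
      (OrderHom.isLeast_lfp_comp G' F').csInf_eq
  refine ⟨?_, ?_, fun o p hop hpo => ⟨?_, ?_⟩⟩
  · rw [hμF_lfp, hμG_lfp]
    exact OrderHom.map_lfp_comp F' G'
  · rw [hμF_lfp, hμG_lfp]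
    exact OrderHom.map_lfp_comp G' F'
  · exact hμF ▸ sInf_le ⟨p, hop, hpo⟩
  · exact hμG ▸ sInf_le ⟨o, hop, hpo⟩
end
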